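/- The binary tetrahedral group 2T, i.e. the subgroup of ℍˣ generated by i and c = (1+i+j+k)/2, has order 24, and equals the union of Q = {±1, ±i, ±j, ±k} with the 16 elements (ε₀·1 + ε₁·i + ε₂·j + ε₃·k)/2 for ε₀, ε₁, ε₂, ε₃ ∈ {1, -1}. -/

import Mathlib

/-! All elements involved have rational coordinates, so the computation can be done in `ℍ[ℚ]`,
where equality is decidable. The 24 Hurwitz units `±1, ±i, ±j, ±k, (±1 ± i ± j ± k)/2` contain `1`,
are stable under right multiplication by `i` and `c`, and are all products of at most five factors
`i`, `c`. Since `i` and `c` have finite order, the subgroup they generate is the submonoid they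
generate, and the three facts above say that this submonoid is exactly the set of Hurwitz units. -/

open Quaternion Pointwise

noncomputable section

instance : CharZero ℍ[ℝ] := charZero_of_injective_algebraMap (algebraMap ℝ ℍ[ℝ]).injective

/-- The imaginary unit quaternion `i`. -/
def qi : ℍ[ℝ] := ⟨0,1,0,0⟩
/-- The imaginary unit quaternion `j`. -/
def qj : ℍ[ℝ] := ⟨0,0,1,0⟩
/-- The imaginary unit quaternion `k`. -/
def qk : ℍ[ℝ] := ⟨0,0,0,1⟩
/-- The quaternion `c = (1 + i + j + k)/2`. -/
def qc : ℍ[ℝ] := (1 + qi + qj + qk) / 2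
/-- The quaternion `(i + j)/√2`. -/
def qs : ℍ[ℝ] := (qi + qj) / ((Real.sqrt 2 : ℝ) : ℍ[ℝ])

lemma sqrt2_ne : ((Real.sqrt 2 : ℝ) : ℍ[ℝ]) ≠ 0 := by
  rw [ne_eq, ← Quaternion.coe_zero, Quaternion.coe_inj]
  positivity

/-- `i` as a unit of the quaternions. -/
def ui : ℍ[ℝ]ˣ := Units.mk0 qi (by
    intro h; have := congrArg (fun q : ℍ[ℝ] => q.imI) h; simp [qi] at this)
/-- `j` as a unit of the quaternions. -/
def uj : ℍ[ℝ]ˣ := Units.mk0 qj (by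
    intro h; have := congrArg (fun q : ℍ[ℝ] => q.imJ) h; simp [qj] at this)
/-- `k` as a unit of the quaternions. -/
def uk : ℍ[ℝ]ˣ := Units.mk0 qk (by
    intro h; have := congrArg (fun q : ℍ[ℝ] => q.imK) h; simp [qk] at this)
/-- `c = (1+i+j+k)/2` as a unit of the quaternions. -/
def uc : ℍ[ℝ]ˣ := Units.mk0 qc
  (div_ne_zero (by
    intro h; have := congrArg (fun q : ℍ[ℝ] => q.imK) h
    change (0:ℝ) + 0 + 0 + 1 = 0 at this; norm_num at this) two_ne_zero)
/-- `(i+j)/√2` as a unit of the quaternions. -/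
def us : ℍ[ℝ]ˣ := Units.mk0 qs
  (div_ne_zero (by
    intro h; have := congrArg (fun q : ℍ[ℝ] => q.imI) h
    change (1:ℝ) + 0 = 0 at this; norm_num at this) sqrt2_ne)

/-- The quaternion group `Q = ⟨i, j⟩ = {±1, ±i, ±j, ±k}`. -/
def QQ : Subgroup ℍ[ℝ]ˣ := Subgroup.closure {ui, uj}
/-- The binary tetrahedral group `2T = ⟨i, c⟩`. -/
def TT : Subgroup ℍ[ℝ]ˣ := Subgroup.closure {ui, uc}
/-- The binary octahedral group `2O = ⟨c, (i+j)/√2⟩`. -/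
def OO : Subgroup ℍ[ℝ]ˣ := Subgroup.closure {uc, us}

namespace Submonoid

variable {M : Type*} [Monoid M]

theorem coe_closure_eq_of_mul_mem {s T : Set M} (h1 : 1 ∈ T)
    (hmul : ∀ x ∈ T, ∀ g ∈ s, x * g ∈ T) (hT : T ⊆ closure s) : (closure s : Set M) = T :=
  subset_antisymm
    (fun _ hx => closure_induction_right h1 (fun x _ g hg hx => hmul x hx g hg) hx) hT

theorem pow_insert_one_subset_closure (s : Set M) (n : ℕ) : insert 1 s ^ n ⊆ closure s := by
  intro x hx
  rw [← closure_insert_one]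
  exact closure_pow_le (subset_closure hx)

end Submonoid

theorem Units.coe_subgroupClosure_eq_preimage {A M : Type*} [Monoid A] [Monoid M] (f : A →* M)
    {s : Set Mˣ} {s₀ : Set A} (hs₀ : ∀ a ∈ s₀, IsOfFinOrder a) (hs : Units.val '' s = f '' s₀) :
    (Subgroup.closure s : Set Mˣ) = Units.val ⁻¹' (f '' Submonoid.closure s₀) := by
  have hfin : ∀ g ∈ s, IsOfFinOrder g := by
    intro g hg
    obtain ⟨a, ha, hag⟩ : (g : M) ∈ f '' s₀ := hs ▸ Set.mem_image_of_mem _ hg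
    rw [← Units.isOfFinOrder_val, ← hag]
    exact f.isOfFinOrder (hs₀ a ha)
  rw [← Subgroup.coe_toSubmonoid, Subgroup.closure_toSubmonoid_of_isOfFinOrder hfin,
    ← Submonoid.coe_map, MonoidHom.map_mclosure, ← hs]
  rw [show Units.val '' s = Units.coeHom M '' s from rfl, ← MonoidHom.map_mclosure,
    Submonoid.coe_map]
  exact (Set.preimage_image_eq _ Units.coeHom_injective).symm

theorem Units.coe_subgroupClosure_eq_preimage_of_finset {A M : Type*} [Monoid A] [DecidableEq A]
    [Monoid M] (f : A →* M) {s : Set Mˣ} {s₀ T : Finset A} {n m : ℕ}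
    (hs : Units.val '' s = f '' s₀) (hn : n ≠ 0) (hord : ∀ a ∈ s₀, a ^ n = 1) (h1 : 1 ∈ T)
    (hmul : ∀ x ∈ T, ∀ g ∈ s₀, x * g ∈ T) (hT : T ⊆ insert 1 s₀ ^ m) :
    (Subgroup.closure s : Set Mˣ) = Units.val ⁻¹' (f '' T) := by
  have hs₀ : ∀ a ∈ (s₀ : Set A), IsOfFinOrder a := fun a ha =>
    isOfFinOrder_iff_pow_eq_one.mpr ⟨n, Nat.pos_of_ne_zero hn, hord a ha⟩
  have hT' : (T : Set A) ⊆ Submonoid.closure (s₀ : Set A) := by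
    refine (Finset.coe_subset.mpr hT).trans ?_
    push_cast
    exact Submonoid.pow_insert_one_subset_closure _ m
  rw [Units.coe_subgroupClosure_eq_preimage f hs₀ hs,
    Submonoid.coe_closure_eq_of_mul_mem (Finset.mem_coe.mpr h1) hmul hT']

instance {R : Type*} [Zero R] [One R] [Neg R] [DecidableEq R] : DecidableEq ℍ[R] :=
  fun _ _ => decidable_of_iff _ QuaternionAlgebra.ext_iff.symm

def ratQuatCast : ℍ[ℚ] →+* ℍ[ℝ] where
  toFun x := ⟨x.re, x.imI, x.imJ, x.imK⟩
  map_one' := by ext <;> simp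
  map_mul' x y := by
    ext
    · erw [Quaternion.re_mul, Quaternion.re_mul]; simp
    · erw [Quaternion.imI_mul, Quaternion.imI_mul]; simp
    · erw [Quaternion.imJ_mul, Quaternion.imJ_mul]; simp
    · erw [Quaternion.imK_mul, Quaternion.imK_mul]; simp
  map_zero' := by ext <;> simp
  map_add' x y := by ext <;> simp <;> rfl

@[simp] lemma re_ratQuatCast (x : ℍ[ℚ]) : (ratQuatCast x).re = x.re := rfl
@[simp] lemma imI_ratQuatCast (x : ℍ[ℚ]) : (ratQuatCast x).imI = x.imI := rfl
@[simp] lemma imJ_ratQuatCast (x : ℍ[ℚ]) : (ratQuatCast x).imJ = x.imJ := rfl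
@[simp] lemma imK_ratQuatCast (x : ℍ[ℚ]) : (ratQuatCast x).imK = x.imK := rfl

lemma ratQuatCast_injective : Function.Injective ratQuatCast := by
  intro x y h
  simpa [Quaternion.ext_iff] using h

def qiRat : ℍ[ℚ] := ⟨0, 1, 0, 0⟩
def qjRat : ℍ[ℚ] := ⟨0, 0, 1, 0⟩
def qkRat : ℍ[ℚ] := ⟨0, 0, 0, 1⟩
def qcRat : ℍ[ℚ] := (1 + qiRat + qjRat + qkRat) / 2

lemma ratQuatCast_qiRat : ratQuatCast qiRat = qi := by
  ext <;> simp only [re_ratQuatCast, imI_ratQuatCast, imJ_ratQuatCast, imK_ratQuatCast] <;>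
    simp [qiRat, qi]

lemma ratQuatCast_qjRat : ratQuatCast qjRat = qj := by
  ext <;> simp only [re_ratQuatCast, imI_ratQuatCast, imJ_ratQuatCast, imK_ratQuatCast] <;>
    simp [qjRat, qj]

lemma ratQuatCast_qkRat : ratQuatCast qkRat = qk := by
  ext <;> simp only [re_ratQuatCast, imI_ratQuatCast, imJ_ratQuatCast, imK_ratQuatCast] <;>
    simp [qkRat, qk]

lemma ratQuatCast_qcRat : ratQuatCast qcRat = qc := by
  simp [qcRat, qc, map_div₀, map_ofNat, ratQuatCast_qiRat, ratQuatCast_qjRat, ratQuatCast_qkRat]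

def lipschitzUnits : Finset ℍ[ℚ] := {1, -1, qiRat, -qiRat, qjRat, -qjRat, qkRat, -qkRat}

def hurwitzHalfUnits : Finset ℍ[ℚ] :=
  (({1, -1} : Finset ℚ) ×ˢ ({1, -1} : Finset ℚ) ×ˢ ({1, -1} : Finset ℚ) ×ˢ ({1, -1} : Finset ℚ)).image
    fun e => ((e.1 : ℍ[ℚ]) + e.2.1 * qiRat + e.2.2.1 * qjRat + e.2.2.2 * qkRat) / 2

def hurwitzUnits : Finset ℍ[ℚ] := lipschitzUnits ∪ hurwitzHalfUnits

lemma coe_TT : (TT : Set ℍ[ℝ]ˣ) = Units.val ⁻¹' (ratQuatCast '' hurwitzUnits) := by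
  -- `i` has order 4 and `c` order 6; rational arithmetic only reduces in the kernel.
  refine Units.coe_subgroupClosure_eq_preimage_of_finset (ratQuatCast : ℍ[ℚ] →* ℍ[ℝ])
    (s₀ := {qiRat, qcRat}) (n := 12) (m := 5) ?_ (by norm_num) (by decide +kernel)
    (by decide +kernel) (by decide +kernel) (by decide +kernel)
  rw [Finset.coe_pair, Set.image_pair, Set.image_pair]
  simp only [MonoidHom.coe_coe, ratQuatCast_qiRat, ratQuatCast_qcRat]
  rfl

lemma coe_QQ : (QQ : Set ℍ[ℝ]ˣ) = Units.val ⁻¹' (ratQuatCast '' lipschitzUnits) := by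
  refine Units.coe_subgroupClosure_eq_preimage_of_finset (ratQuatCast : ℍ[ℚ] →* ℍ[ℝ])
    (s₀ := {qiRat, qjRat}) (n := 4) (m := 3) ?_ (by norm_num) (by decide +kernel)
    (by decide +kernel) (by decide +kernel) (by decide +kernel)
  rw [Finset.coe_pair, Set.image_pair, Set.image_pair]
  simp only [MonoidHom.coe_coe, ratQuatCast_qiRat, ratQuatCast_qjRat]
  rfl

lemma ncard_preimage_val_image_ratQuatCast {T : Finset ℍ[ℚ]} (h0 : 0 ∉ T) :
    (Units.val ⁻¹' (ratQuatCast '' T)).ncard = T.card := by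
  rw [Set.ncard_preimage_of_injective_subset_range Units.val_injective,
    Set.ncard_image_of_injective _ ratQuatCast_injective, Set.ncard_coe_finset]
  rintro _ ⟨x, hx, rfl⟩
  exact isUnit_iff_ne_zero.mpr
    ((map_ne_zero_iff _ ratQuatCast_injective).mpr (ne_of_mem_of_not_mem hx h0))

lemma ratQuatCast_halfSum (a b c d : ℚ) :
    ratQuatCast ((a + b * qiRat + c * qjRat + d * qkRat) / 2) =
      ((a : ℝ) + (b : ℝ) * qi + (c : ℝ) * qj + (d : ℝ) * qk) / 2 := by
  simp [map_div₀, map_ofNat, Quaternion.coe_ratCast, ratQuatCast_qiRat, ratQuatCast_qjRat,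
    ratQuatCast_qkRat]

lemma mem_image_hurwitzHalfUnits (x : ℍ[ℝ]) :
    x ∈ ratQuatCast '' hurwitzHalfUnits ↔
      ∃ e₀ ∈ ({1, -1} : Set ℝ), ∃ e₁ ∈ ({1, -1} : Set ℝ),
        ∃ e₂ ∈ ({1, -1} : Set ℝ), ∃ e₃ ∈ ({1, -1} : Set ℝ),
        x = ((e₀ : ℍ[ℝ]) + (e₁ : ℍ[ℝ]) * qi + (e₂ : ℍ[ℝ]) * qj + (e₃ : ℍ[ℝ]) * qk) / 2 := by
  have hsigns : ({1, -1} : Set ℝ) = Rat.cast '' ({1, -1} : Finset ℚ) := by simp [Set.image_pair]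
  rw [hsigns]
  simp only [Set.exists_mem_image]
  simp only [hurwitzHalfUnits, Finset.coe_image, Set.image_image,
    ratQuatCast_halfSum, Finset.coe_product, Set.mem_image, Set.mem_prod, Prod.exists, and_assoc]
  constructor
  · rintro ⟨a, b, c, d, ha, hb, hc, hd, rfl⟩
    exact ⟨a, ha, b, hb, c, hc, d, hd, rfl⟩
  · rintro ⟨a, ha, b, hb, c, hc, d, hd, rfl⟩
    exact ⟨a, b, c, d, ha, hb, hc, hd, rfl⟩

/-- The binary tetrahedral group `2T = ⟨i, c⟩` has order 24 and equals the union of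
`Q = {±1, ±i, ±j, ±k}` with the 16 elements `(ε₀·1 + ε₁·i + ε₂·j + ε₃·k)/2`,
`ε₀, ε₁, ε₂, ε₃ ∈ {1, -1}`. -/
theorem statement1 :
    Nat.card TT = 24 ∧
    (TT : Set ℍ[ℝ]ˣ) = (QQ : Set ℍ[ℝ]ˣ) ∪
      {u : ℍ[ℝ]ˣ | ∃ e₀ ∈ ({1, -1} : Set ℝ), ∃ e₁ ∈ ({1, -1} : Set ℝ),
        ∃ e₂ ∈ ({1, -1} : Set ℝ), ∃ e₃ ∈ ({1, -1} : Set ℝ),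
        (u : ℍ[ℝ]) =
          ((e₀ : ℍ[ℝ]) + (e₁ : ℍ[ℝ]) * qi + (e₂ : ℍ[ℝ]) * qj + (e₃ : ℍ[ℝ]) * qk) / 2} := by
  refine ⟨?_, ?_⟩
  · rw [← SetLike.coe_sort_coe, Nat.card_coe_set_eq, coe_TT,
      ncard_preimage_val_image_ratQuatCast (by decide +kernel)]
    decide +kernel
  · rw [coe_TT, coe_QQ, hurwitzUnits, Finset.coe_union, Set.image_union, Set.preimage_union]
    congr 1
    ext u
    exact mem_image_hurwitzHalfUnits u
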